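/- Let $\lambda_0 < \lambda_1 < \cdots < \lambda_N$ be distinct real numbers and $a_0,\ldots,a_N$ complex numbers. Then $\liminf_{T\to+\infty} \frac{1}{T}\int_{-T/2}^{T/2}\left|\sum_{k=0}^N a_k e^{2i\pi\lambda_k t}\right| dt \ge C_{MPS} \sum_{k=0}^N \frac{|a_k|}{k+1}$, where $C_{MPS}$ is the constant of the Mc Gehee–Pigno–Smith theorem for integer frequencies. -/

import Mathlib

/-
Choose `q ∈ ℕ` such that every `q λ_k` lies within `η` of an integer `n_k` (simultaneous
Dirichlet approximation); taking `q` a multiple of a large integer keeps the `n_k` strictly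
increasing. On any window `[x, x + q]` the substitution `t = x + q s` turns `f` into a
trigonometric polynomial in `s ∈ [0, 1]` with frequencies `q λ_k` and coefficients of modulus
`|a_k|`. Replacing `q λ_k` by `n_k` moves it by at most `2π η ∑ |a_k|` uniformly, so the integer
Mc Gehee–Pigno–Smith inequality bounds the mean of `|f|` over every window of length `q` below
by `C ∑ |a_k| / (k + 1) - 2π η ∑ |a_k|`. Tiling `[-T/2, T/2]` by such windows passes the bound to
the liminf of the means.
-/

open Real MeasureTheory Finset Filter

lemma abs_natCast_mul_sub_round_le (k : ℕ) (x : ℝ) :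
    |k * x - round (k * x)| ≤ k * |x - round x| := by
  calc |k * x - round (k * x)| ≤ |k * x - ((k * round x : ℤ) : ℝ)| := round_le _ _
    _ = k * |x - round x| := by
      rw [Int.cast_mul, Int.cast_natCast, ← mul_sub, abs_mul, Nat.abs_cast]

-- Simultaneous Dirichlet approximation, by iterating the one-dimensional theorem.
lemma exists_nat_forall_abs_mul_sub_round_le {ι : Type*} (s : Finset ι) (μ : ι → ℝ)
    {η : ℝ} (hη : 0 < η) :
    ∃ q : ℕ, 0 < q ∧ ∀ i ∈ s, |q * μ i - round (q * μ i)| ≤ η := by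
  classical
  induction s using Finset.induction_on generalizing η with
  | empty => exact ⟨1, one_pos, by simp⟩
  | insert a s _ ih =>
    set K := ⌈1 / η⌉₊
    have hK : 0 < K := Nat.ceil_pos.mpr (by positivity)
    have hKη : 1 / ((K : ℝ) + 1) ≤ η := by
      rw [div_le_iff₀ (by positivity)]
      nlinarith [Nat.le_ceil (1 / η), mul_div_cancel₀ (1 : ℝ) hη.ne']
    obtain ⟨q, hq, hs⟩ := ih (η := η / K) (by positivity)
    obtain ⟨k, hk, hkK, ha⟩ := Real.exists_nat_abs_mul_sub_round_le (q * μ a) hK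
    refine ⟨k * q, Nat.mul_pos hk hq, ?_⟩
    rintro i hi
    push_cast
    rcases Finset.mem_insert.mp hi with rfl | hi
    · rw [mul_assoc]; exact ha.trans hKη
    · calc |k * q * μ i - round (k * q * μ i)| ≤ k * |q * μ i - round (q * μ i)| := by
            rw [mul_assoc]; exact abs_natCast_mul_sub_round_le k _
        _ ≤ K * (η / K) := by gcongr; exact hs i hi
        _ = η := mul_div_cancel₀ η (by positivity)

lemma exists_nat_strictMono_round_mul {N : ℕ} {lam : ℕ → ℝ}
    (hlam : ∀ k < N, lam k < lam (k + 1)) {η : ℝ} (hη : 0 < η) (hη' : η < 1 / 2) :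
    ∃ q : ℕ, 0 < q ∧ (∀ k < N, round (q * lam k) < round (q * lam (k + 1))) ∧
      ∀ k ≤ N, |q * lam k - round (q * lam k)| ≤ η := by
  obtain ⟨L, hLgap, hL⟩ : ∃ L : ℕ, (∀ k < N, 1 ≤ L * (lam (k + 1) - lam k)) ∧ 0 < L := by
    refine (((Set.finite_Iio N).eventually_all (l := atTop)).mpr fun k hk => ?_).and
      (eventually_gt_atTop 0) |>.exists
    exact (tendsto_natCast_atTop_atTop.atTop_mul_const (sub_pos.mpr (hlam k hk))).eventually_ge_atTop
      1
  obtain ⟨q, hq, happrox⟩ :=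
    exists_nat_forall_abs_mul_sub_round_le (range (N + 1)) (fun k => L * lam k) hη
  have hqL : ∀ k ≤ N,
      |((q * L : ℕ) : ℝ) * lam k - round (((q * L : ℕ) : ℝ) * lam k)| ≤ η := fun k hk => by
    simpa [mul_assoc] using happrox k (mem_range.mpr (Nat.lt_succ_of_le hk))
  refine ⟨q * L, Nat.mul_pos hq hL, fun k hk => ?_, hqL⟩
  have hlo := abs_le.mp (hqL k hk.le)
  have hhi := abs_le.mp (hqL (k + 1) hk)
  have hstep : 1 ≤ ((q * L : ℕ) : ℝ) * lam (k + 1) - ((q * L : ℕ) : ℝ) * lam k := by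
    have : (1 : ℝ) ≤ q := mod_cast hq
    push_cast
    nlinarith [hLgap k hk]
  have : (round (((q * L : ℕ) : ℝ) * lam k) : ℝ) < round (((q * L : ℕ) : ℝ) * lam (k + 1)) := by
    linarith
  exact_mod_cast this

lemma mul_le_integral_of_forall_le_integral {g : ℝ → ℝ} (hg : Continuous g) {q c : ℝ}
    (hblock : ∀ x, q * c ≤ ∫ t in x..x + q, g t) (m : ℕ) (x : ℝ) :
    m * (q * c) ≤ ∫ t in x..x + m * q, g t := by
  induction m with
  | zero => simp
  | succ m ih =>
    rw [← intervalIntegral.integral_add_adjacent_intervals (b := x + m * q)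
      (hg.intervalIntegrable _ _) (hg.intervalIntegrable _ _)]
    have := hblock (x + m * q)
    rw [show x + m * q + q = x + (m + 1 : ℕ) * q by push_cast; ring] at this
    push_cast at this ⊢
    linarith

lemma le_liminf_average_of_forall_le_integral {g : ℝ → ℝ} (hg : Continuous g)
    (hg0 : ∀ t, 0 ≤ g t) {A : ℝ} (hgA : ∀ t, g t ≤ A) {q c : ℝ} (hq : 0 < q)
    (hblock : ∀ x, q * c ≤ ∫ t in x..x + q, g t) :
    c ≤ liminf (fun T : ℝ => 1 / T * ∫ t in -(T / 2)..T / 2, g t) atTop := by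
  obtain ⟨c', hcc', hc', hblock'⟩ :
      ∃ c', c ≤ c' ∧ 0 ≤ c' ∧ ∀ x, q * c' ≤ ∫ t in x..x + q, g t := by
    rcases le_total 0 c with hc | hc
    · exact ⟨c, le_rfl, hc, hblock⟩
    · refine ⟨0, hc, le_rfl, fun x => ?_⟩
      rw [mul_zero]
      exact intervalIntegral.integral_nonneg (by linarith) fun t _ => hg0 t
  have hlower : ∀ T > 0, c' - q * c' / T ≤ 1 / T * ∫ t in -(T / 2)..T / 2, g t := by
    intro T hT
    set m := ⌊T / q⌋₊
    have hmT : m * q ≤ T := (le_div_iff₀ hq).mp (Nat.floor_le (by positivity))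
    have hTm : T - q ≤ m * q := by
      have := (div_lt_iff₀ hq).mp (Nat.lt_floor_add_one (T / q))
      linarith
    have hint : (T - q) * c' ≤ ∫ t in -(T / 2)..T / 2, g t :=
      calc (T - q) * c' ≤ m * (q * c') := by
            rw [← mul_assoc]; exact mul_le_mul_of_nonneg_right hTm hc'
        _ ≤ ∫ t in -(T / 2)..-(T / 2) + m * q, g t :=
            mul_le_integral_of_forall_le_integral hg hblock' m _
        _ ≤ ∫ t in -(T / 2)..T / 2, g t :=
            intervalIntegral.integral_mono_interval le_rfl (le_add_of_nonneg_right (by positivity))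
              (by linarith) (Eventually.of_forall hg0) (hg.intervalIntegrable _ _)
    rw [one_div_mul_eq_div, le_div_iff₀ hT]
    field_simp
    linarith
  have hlim : Tendsto (fun T : ℝ => c' - q * c' / T) atTop (nhds c') := by
    simpa using (tendsto_const_nhds (x := c')).sub
      ((tendsto_const_nhds (x := q * c')).div_atTop tendsto_id)
  have hbdd : ∀ T > 0, 1 / T * ∫ t in -(T / 2)..T / 2, g t ≤ A := by
    intro T hT
    have : (∫ t in -(T / 2)..T / 2, g t) ≤ T * A := by
      calc (∫ t in -(T / 2)..T / 2, g t) ≤ ∫ _ in -(T / 2)..T / 2, A :=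
            intervalIntegral.integral_mono_on (by linarith) (hg.intervalIntegrable _ _)
              intervalIntegrable_const fun t _ => hgA t
        _ = T * A := by simp
    rw [one_div_mul_eq_div, div_le_iff₀ hT]
    linarith
  calc c ≤ c' := hcc'
    _ = liminf (fun T : ℝ => c' - q * c' / T) atTop := hlim.liminf_eq.symm
    _ ≤ _ := liminf_le_liminf ((eventually_gt_atTop 0).mono hlower) hlim.isBoundedUnder_ge
          (isCoboundedUnder_ge_of_eventually_le atTop ((eventually_gt_atTop 0).mono hbdd))

noncomputable def expSum (N : ℕ) (a : ℕ → ℂ) (ν : ℕ → ℝ) (t : ℝ) : ℂ :=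
  ∑ k ∈ range (N + 1), a k * Complex.exp (2 * π * Complex.I * (ν k : ℂ) * (t : ℂ))

lemma norm_exp_two_pi_I_mul_mul (ν t : ℝ) :
    ‖Complex.exp (2 * π * Complex.I * (ν : ℂ) * (t : ℂ))‖ = 1 := by
  rw [← Complex.norm_exp_ofReal_mul_I (2 * π * ν * t)]
  push_cast; ring_nf

lemma norm_exp_two_pi_I_mul_mul_sub_le (μ ν t : ℝ) :
    ‖Complex.exp (2 * π * Complex.I * (μ : ℂ) * (t : ℂ))
        - Complex.exp (2 * π * Complex.I * (ν : ℂ) * (t : ℂ))‖ ≤ 2 * π * |t| * |μ - ν| := by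
  have hfac : Complex.exp (2 * π * Complex.I * (μ : ℂ) * (t : ℂ))
        - Complex.exp (2 * π * Complex.I * (ν : ℂ) * (t : ℂ))
      = Complex.exp (2 * π * Complex.I * (ν : ℂ) * (t : ℂ))
        * (Complex.exp (Complex.I * ((2 * π * t * (μ - ν) : ℝ) : ℂ)) - 1) := by
    rw [mul_sub, mul_one, ← Complex.exp_add]
    push_cast; ring_nf
  rw [hfac, norm_mul, norm_exp_two_pi_I_mul_mul, one_mul]
  calc _ ≤ ‖2 * π * t * (μ - ν)‖ := norm_exp_I_mul_ofReal_sub_one_le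
    _ = 2 * π * |t| * |μ - ν| := by
      rw [Real.norm_eq_abs, abs_mul, abs_mul, abs_of_pos Real.two_pi_pos]

lemma continuous_expSum (N : ℕ) (a : ℕ → ℂ) (ν : ℕ → ℝ) : Continuous (expSum N a ν) := by
  unfold expSum; fun_prop

lemma norm_expSum_le (N : ℕ) (a : ℕ → ℂ) (ν : ℕ → ℝ) (t : ℝ) :
    ‖expSum N a ν t‖ ≤ ∑ k ∈ range (N + 1), ‖a k‖ := by
  refine (norm_sum_le _ _).trans (sum_le_sum fun k _ => ?_)
  rw [norm_mul, norm_exp_two_pi_I_mul_mul, mul_one]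

lemma expSum_mul_add (N : ℕ) (a : ℕ → ℂ) (ν : ℕ → ℝ) (q x s : ℝ) :
    expSum N a ν (q * s + x)
      = expSum N (fun k => a k * Complex.exp (2 * π * Complex.I * (ν k : ℂ) * (x : ℂ)))
          (fun k => q * ν k) s := by
  refine sum_congr rfl fun k _ => ?_
  rw [mul_assoc (a k), ← Complex.exp_add]
  push_cast; ring_nf

lemma norm_expSum_sub_le {N : ℕ} (a : ℕ → ℂ) {μ ν : ℕ → ℝ} {η : ℝ}
    (h : ∀ k ≤ N, |μ k - ν k| ≤ η) (t : ℝ) :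
    ‖expSum N a μ t - expSum N a ν t‖ ≤ 2 * π * |t| * η * ∑ k ∈ range (N + 1), ‖a k‖ := by
  rw [expSum, expSum, ← sum_sub_distrib, mul_sum]
  refine (norm_sum_le _ _).trans (sum_le_sum fun k hk => ?_)
  rw [← mul_sub, norm_mul, mul_comm]
  gcongr
  calc _ ≤ 2 * π * |t| * |μ k - ν k| := norm_exp_two_pi_I_mul_mul_sub_le _ _ _
    _ ≤ 2 * π * |t| * η := by gcongr; exact h k (Nat.lt_succ_iff.mp (mem_range.mp hk))

lemma integral_norm_expSum_sub_le {N : ℕ} (a : ℕ → ℂ) {μ ν : ℕ → ℝ} {η : ℝ}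
    (h : ∀ k ≤ N, |μ k - ν k| ≤ η) :
    (∫ s in (0 : ℝ)..1, ‖expSum N a ν s‖) - 2 * π * η * ∑ k ∈ range (N + 1), ‖a k‖
      ≤ ∫ s in (0 : ℝ)..1, ‖expSum N a μ s‖ := by
  have hη : 0 ≤ η := (abs_nonneg _).trans (h 0 N.zero_le)
  have hpt : ∀ s ∈ Set.Icc (0 : ℝ) 1,
      ‖expSum N a ν s‖ - 2 * π * η * ∑ k ∈ range (N + 1), ‖a k‖ ≤ ‖expSum N a μ s‖ := by
    rintro s ⟨hs0, hs1⟩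
    have hdiff := norm_expSum_sub_le a h s
    rw [abs_of_nonneg hs0] at hdiff
    have : 2 * π * s * η * ∑ k ∈ range (N + 1), ‖a k‖
        ≤ 2 * π * η * ∑ k ∈ range (N + 1), ‖a k‖ := by
      have hc : 0 ≤ 2 * π * η * ∑ k ∈ range (N + 1), ‖a k‖ := by positivity
      linarith [mul_le_mul_of_nonneg_right hs1 hc]
    linarith [norm_sub_norm_le (expSum N a ν s) (expSum N a μ s),
      norm_sub_rev (expSum N a ν s) (expSum N a μ s)]
  have hint := fun ν => (continuous_expSum N a ν).norm.intervalIntegrable (μ := volume) 0 1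
  calc _ = ∫ s in (0 : ℝ)..1, (‖expSum N a ν s‖ - 2 * π * η * ∑ k ∈ range (N + 1), ‖a k‖) := by
        rw [intervalIntegral.integral_sub (hint ν) intervalIntegrable_const]; simp
    _ ≤ _ := intervalIntegral.integral_mono_on zero_le_one
        ((hint ν).sub intervalIntegrable_const) (hint μ) hpt

lemma mul_sub_le_integral_norm_expSum {N : ℕ} {a : ℕ → ℂ} {lam ν : ℕ → ℝ} {q η B : ℝ}
    (hq : 0 < q) (hB : ∀ b : ℕ → ℂ, (∀ k, ‖b k‖ = ‖a k‖) → B ≤ ∫ s in (0 : ℝ)..1, ‖expSum N b ν s‖)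
    (happrox : ∀ k ≤ N, |q * lam k - ν k| ≤ η) (x : ℝ) :
    q * (B - 2 * π * η * ∑ k ∈ range (N + 1), ‖a k‖) ≤ ∫ t in x..x + q, ‖expSum N a lam t‖ := by
  obtain ⟨b, hb, hrescale⟩ : ∃ b : ℕ → ℂ, (∀ k, ‖b k‖ = ‖a k‖) ∧ ∫ t in x..x + q, ‖expSum N a lam t‖
      = q * ∫ s in (0 : ℝ)..1, ‖expSum N b (fun k => q * lam k) s‖ := by
    refine ⟨fun k => a k * Complex.exp (2 * π * Complex.I * (lam k : ℂ) * (x : ℂ)),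
      fun k => by rw [norm_mul, norm_exp_two_pi_I_mul_mul, mul_one], ?_⟩
    have := intervalIntegral.smul_integral_comp_mul_add (a := 0) (b := 1)
      (fun t => ‖expSum N a lam t‖) q x
    simp only [expSum_mul_add, mul_zero, zero_add, mul_one, smul_eq_mul] at this
    rw [this, add_comm]
  rw [hrescale]
  gcongr
  calc B - 2 * π * η * ∑ k ∈ range (N + 1), ‖a k‖
      ≤ (∫ s in (0 : ℝ)..1, ‖expSum N b ν s‖) - 2 * π * η * ∑ k ∈ range (N + 1), ‖b k‖ := by
        simp only [hb]; linarith [hB b hb]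
    _ ≤ _ := integral_norm_expSum_sub_le b happrox

theorem stmt_19_general (C : ℝ)
    (hMPS : ∀ (N : ℕ) (n : ℕ → ℤ) (a : ℕ → ℂ),
      (∀ k < N, n k < n (k + 1)) →
      (∫ t in (0 : ℝ)..1,
          ‖∑ k ∈ Finset.range (N + 1),
              a k * Complex.exp (2 * π * Complex.I * (n k : ℂ) * t)‖)
        ≥ C * ∑ k ∈ Finset.range (N + 1), ‖a k‖ / (k + 1))
    (N : ℕ) (lam : ℕ → ℝ) (hlam : ∀ k < N, lam k < lam (k + 1))
    (a : ℕ → ℂ) :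
    Filter.liminf (fun T : ℝ => (1 / T) *
        ∫ t in (-(T / 2))..(T / 2),
          ‖∑ k ∈ Finset.range (N + 1),
              a k * Complex.exp (2 * π * Complex.I * (lam k : ℂ) * t)‖)
      Filter.atTop
      ≥ C * ∑ k ∈ Finset.range (N + 1), ‖a k‖ / (k + 1) := by
  set A := ∑ k ∈ range (N + 1), ‖a k‖
  set R := C * ∑ k ∈ range (N + 1), ‖a k‖ / (k + 1)
  change R ≤ liminf (fun T : ℝ => 1 / T * ∫ t in -(T / 2)..T / 2, ‖expSum N a lam t‖) atTop
  refine le_of_forall_sub_le fun ε hε => ?_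
  set η := min (1 / 4) (ε / (2 * π * (A + 1)))
  have hA : 0 ≤ A := sum_nonneg fun k _ => norm_nonneg (a k)
  have hη : 0 < η := lt_min (by norm_num) (by positivity)
  have hηε : 2 * π * η * A ≤ ε := by
    have := min_le_right (1 / 4) (ε / (2 * π * (A + 1)))
    rw [le_div_iff₀ (by positivity)] at this
    nlinarith [Real.pi_pos]
  obtain ⟨q, hq, hmono, happrox⟩ :=
    exists_nat_strictMono_round_mul hlam hη ((min_le_left _ _).trans_lt (by norm_num))
  have hB : ∀ b : ℕ → ℂ, (∀ k, ‖b k‖ = ‖a k‖) →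
      R ≤ ∫ s in (0 : ℝ)..1, ‖expSum N b (fun k => (round (q * lam k) : ℝ)) s‖ := by
    intro b hb
    simpa [expSum, R, hb] using (hMPS N _ b hmono).le
  have hq' : (0 : ℝ) < q := Nat.cast_pos.mpr hq
  refine le_liminf_average_of_forall_le_integral (continuous_expSum N a lam).norm
    (fun _ => norm_nonneg _) (norm_expSum_le N a lam) hq' fun x => ?_
  calc q * (R - ε) ≤ q * (R - 2 * π * η * A) := by gcongr
    _ ≤ _ := mul_sub_le_integral_norm_expSum hq' hB happrox x

theorem stmt_19 (C : ℝ) (hC : 0 < C)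
    (hMPS : ∀ (N : ℕ) (n : ℕ → ℤ) (a : ℕ → ℂ),
      (∀ k < N, n k < n (k + 1)) →
      (∫ t in (0 : ℝ)..1,
          ‖∑ k ∈ Finset.range (N + 1),
              a k * Complex.exp (2 * π * Complex.I * (n k : ℂ) * t)‖)
        ≥ C * ∑ k ∈ Finset.range (N + 1), ‖a k‖ / (k + 1))
    (N : ℕ) (lam : ℕ → ℝ) (hlam : ∀ k < N, lam k < lam (k + 1))
    (a : ℕ → ℂ) :
    Filter.liminf (fun T : ℝ => (1 / T) *
        ∫ t in (-(T / 2))..(T / 2),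
          ‖∑ k ∈ Finset.range (N + 1),
              a k * Complex.exp (2 * π * Complex.I * (lam k : ℂ) * t)‖)
      Filter.atTop
      ≥ C * ∑ k ∈ Finset.range (N + 1), ‖a k‖ / (k + 1) :=
  stmt_19_general C hMPS N lam hlam a
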